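/- For every even natural number n, the sum b(0)+b(1)+⋯+b(n) of the first n+1 evil numbers equals n² + 3n/2 + t(n), where t(n) is the Thue–Morse sequence; for odd n it equals n² + (3n+1)/2. -/

import Mathlib

/-!
Since t(2n) = t(n) and t(2n+1) = 1 - t(n), each pair {2n, 2n+1} contains exactly one evil
number, namely 2n + t(n). Hence b(n) = 2n + t(n), and summing reduces the claim to the fact that
t takes the value 1 exactly q times on {0, …, 2q-1}.
-/

/-- Sum of base-`d` digits of `n`. -/
def sdig (d n : ℕ) : ℕ := (Nat.digits d n).sum

/-- `t_d(n)`: base-`d` digit sum of `n`, reduced mod `d`. -/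
def td (d n : ℕ) : ℕ := sdig d n % d

/-- `a_{j,d}(n)`: n-th natural (0-indexed, increasing) with base-`d` digit sum ≡ j mod d. -/
noncomputable def agen (d j n : ℕ) : ℕ := Nat.nth (fun k => sdig d k % d = j) n

/-- n-th odious number (binary digit sum odd), 0-indexed increasing. -/
noncomputable def odious (n : ℕ) : ℕ := Nat.nth (fun k => (Nat.digits 2 k).sum % 2 = 1) n

/-- n-th evil number (binary digit sum even), 0-indexed increasing. -/
noncomputable def evil (n : ℕ) : ℕ := Nat.nth (fun k => (Nat.digits 2 k).sum % 2 = 0) n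

/-- Thue–Morse sequence: parity of the binary digit sum. -/
def tm (n : ℕ) : ℕ := (Nat.digits 2 n).sum % 2

open Finset

theorem digits_sum_add_mul {b : ℕ} (hb : 1 < b) {x : ℕ} (hx : x < b) (y : ℕ) :
    (Nat.digits b (x + b * y)).sum = x + (Nat.digits b y).sum := by
  by_cases h : x = 0 ∧ y = 0
  · simp [h.1, h.2]
  · rw [Nat.digits_add b hb x y hx (not_and_or.mp h), List.sum_cons]

lemma tm_lt_two (n : ℕ) : tm n < 2 := Nat.mod_lt _ two_pos

lemma tm_add_two_mul {x : ℕ} (hx : x < 2) (n : ℕ) : tm (x + 2 * n) = (x + tm n) % 2 := by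
  simp only [tm, digits_sum_add_mul one_lt_two hx, Nat.add_mod_mod]

lemma tm_two_mul (n : ℕ) : tm (2 * n) = tm n := by
  simpa [Nat.mod_eq_of_lt (tm_lt_two n)] using tm_add_two_mul two_pos n

lemma tm_two_mul_add_one (n : ℕ) : tm (2 * n + 1) = 1 - tm n := by
  have h := tm_add_two_mul one_lt_two n
  have := tm_lt_two n
  rw [add_comm] at h
  omega

lemma tm_two_mul_add_tm_two_mul_add_one (n : ℕ) : tm (2 * n) + tm (2 * n + 1) = 1 := by
  have := tm_lt_two n
  rw [tm_two_mul, tm_two_mul_add_one]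
  omega

lemma sum_range_two_mul_tm (n : ℕ) : ∑ k ∈ range (2 * n), tm k = n := by
  induction n with
  | zero => simp
  | succ n ih =>
    rw [mul_add_one, sum_range_succ, sum_range_succ, ih, add_assoc,
      tm_two_mul_add_tm_two_mul_add_one]

lemma count_tm_eq_zero_two_mul (n : ℕ) : Nat.count (fun k => tm k = 0) (2 * n) = n := by
  induction n with
  | zero => simp
  | succ n ih =>
    have := tm_two_mul_add_tm_two_mul_add_one n
    rw [mul_add_one, Nat.count_succ, Nat.count_succ, ih]
    split_ifs <;> omega

lemma evil_eq_two_mul_add_tm (n : ℕ) : evil n = 2 * n + tm n := by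
  suffices h : tm (2 * n + tm n) = 0 ∧ Nat.count (fun k => tm k = 0) (2 * n + tm n) = n by
    have := Nat.nth_count (p := fun k => tm k = 0) h.1
    rwa [h.2] at this
  have hpair := tm_two_mul_add_tm_two_mul_add_one n
  obtain h | h : tm n = 0 ∨ tm n = 1 := by have := tm_lt_two n; omega
  · rw [h, add_zero]
    exact ⟨by rw [tm_two_mul, h], count_tm_eq_zero_two_mul n⟩
  · have h2 : tm (2 * n) = 1 := by rw [tm_two_mul, h]
    rw [h]
    refine ⟨by omega, ?_⟩
    simp [Nat.count_succ, count_tm_eq_zero_two_mul, h2]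

lemma sum_range_evil (m : ℕ) : ∑ k ∈ range m, evil k = m * (m - 1) + ∑ k ∈ range m, tm k := by
  rw [sum_congr rfl fun k _ => evil_eq_two_mul_add_tm k, sum_add_distrib, ← mul_sum, mul_comm 2,
    sum_range_id_mul_two]

theorem stmt10 (n : ℕ) :
    (Even n → (2 * ∑ k ∈ Finset.range (n + 1), evil k : ℤ) = 2 * n ^ 2 + 3 * n + 2 * tm n) ∧
    (Odd n → (2 * ∑ k ∈ Finset.range (n + 1), evil k : ℤ) = 2 * n ^ 2 + 3 * n + 1) := by
  have hsum : (2 * ∑ k ∈ range (n + 1), evil k : ℤ) =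
      2 * (n + 1) * n + 2 * ∑ k ∈ range (n + 1), tm k := by
    rw [sum_range_evil, Nat.add_sub_cancel]
    push_cast
    ring
  refine ⟨fun ⟨q, hq⟩ => ?_, fun ⟨q, hq⟩ => ?_⟩
  · subst hq
    rw [hsum, sum_range_succ, ← two_mul, sum_range_two_mul_tm]
    push_cast
    ring
  · subst hq
    rw [hsum, show 2 * q + 1 + 1 = 2 * (q + 1) by ring, sum_range_two_mul_tm]
    push_cast
    ring
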